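/- arXiv:1904.03263 — 2 statements merged into one kernel-verified Lean document; each statement's English description precedes it below -/
import Mathlib

section
/- Let M be a square joint probability matrix on a finite type α, let H*con = max(H_M(Y|X), H_M(X|Y)), and let M̄ = (M + Mᵀ)/2 be its symmetrized matrix. Then the conditional entropies of M̄ satisfy H_{M̄}(Y|X) = H_{M̄}(X|Y) ≤ H*con + 1. (Theorem: the conditional entropy of the symmetrized matrix cannot exceed the maximal conditional entropy of M by more than one bit.) -/
/-- A probability vector on a finite type: nonnegative entries summing to 1. -/
def IsProbVec {α : Type*} [Fintype α] (p : α → ℝ) : Prop :=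
  (∀ a, 0 ≤ p a) ∧ ∑ a, p a = 1

/-- Binary Shannon entropy of a (probability) vector. -/
noncomputable def binH {α : Type*} [Fintype α] (p : α → ℝ) : ℝ :=
  (∑ a, Real.negMulLog (p a)) / Real.log 2
/-- A joint probability matrix on finite types α and β. -/
def IsJointProbMat {α β : Type*} [Fintype α] [Fintype β] (M : α → β → ℝ) : Prop :=
  (∀ a b, 0 ≤ M a b) ∧ ∑ a, ∑ b, M a b = 1

/-- Binary joint entropy of a joint probability matrix, viewed as a vector on α × β. -/
noncomputable def jointH {α β : Type*} [Fintype α] [Fintype β] (M : α → β → ℝ) : ℝ :=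
  binH (fun ab : α × β => M ab.1 ab.2)

/-- Row marginal of a joint probability matrix. -/
noncomputable def rowMarg {α β : Type*} [Fintype α] [Fintype β] (M : α → β → ℝ) : α → ℝ :=
  fun a => ∑ b, M a b

/-- Column marginal of a joint probability matrix. -/
noncomputable def colMarg {α β : Type*} [Fintype α] [Fintype β] (M : α → β → ℝ) : β → ℝ :=
  fun b => ∑ a, M a b

/-- Binary conditional entropy H_M(Y|X) = H(M) - H(rowMarg M). -/
noncomputable def condHYX {α β : Type*} [Fintype α] [Fintype β] (M : α → β → ℝ) : ℝ :=
  jointH M - binH (rowMarg M)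

/-- Binary conditional entropy H_M(X|Y) = H(M) - H(colMarg M). -/
noncomputable def condHXY {α β : Type*} [Fintype α] [Fintype β] (M : α → β → ℝ) : ℝ :=
  jointH M - binH (colMarg M)

/-- Symmetrized matrix (M + Mᵀ)/2 of a square joint probability matrix. -/
noncomputable def symmetrize {α : Type*} [Fintype α] (M : α → α → ℝ) : α → α → ℝ :=
  fun a b => (M a b + M b a) / 2

/-!
Symmetrizing averages `M` with its transpose. Since `negMulLog (x / 2)` equals
`negMulLog x / 2 + x * log 2 / 2` and `negMulLog` is subadditive on `[0, ∞)`, each entry of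
`M̄` carries at most the average entropy of `M a b` and `M b a` plus half a bit per unit of mass,
so `H(M̄) ≤ H(M) + 1`. Both marginals of `M̄` equal the average of the two marginals of `M`, so by
concavity of `negMulLog` their entropy is at least the average of `H(rM)` and `H(cM)`. Subtracting,
`H_M̄(Y|X) ≤ (H_M(Y|X) + H_M(X|Y)) / 2 + 1`.
-/

open Real Finset

lemma negMulLog_div_two (x : ℝ) : negMulLog (x / 2) = negMulLog x / 2 + x * log 2 / 2 := by
  rcases eq_or_ne x 0 with rfl | hx
  · simp
  · rw [negMulLog, negMulLog, log_div hx two_ne_zero]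
    ring

lemma mul_log_le_mul_log_add {x y : ℝ} (hx : 0 ≤ x) (hy : 0 ≤ y) :
    x * log x ≤ x * log (x + y) := by
  rcases hx.eq_or_lt with rfl | hx
  · simp
  · exact mul_le_mul_of_nonneg_left (log_le_log hx (le_add_of_nonneg_right hy)) hx.le

lemma negMulLog_add_le {x y : ℝ} (hx : 0 ≤ x) (hy : 0 ≤ y) :
    negMulLog (x + y) ≤ negMulLog x + negMulLog y := by
  have hxy := mul_log_le_mul_log_add hx hy
  have hyx := mul_log_le_mul_log_add hy hx
  rw [add_comm y x] at hyx
  simp only [negMulLog]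
  linarith

lemma negMulLog_add_negMulLog_le_midpoint {x y : ℝ} (hx : 0 ≤ x) (hy : 0 ≤ y) :
    (negMulLog x + negMulLog y) / 2 ≤ negMulLog ((x + y) / 2) := by
  have h := concaveOn_negMulLog.2 (Set.mem_Ici.2 hx) (Set.mem_Ici.2 hy)
    (by norm_num : (0 : ℝ) ≤ 1 / 2) (by norm_num : (0 : ℝ) ≤ 1 / 2) (by norm_num)
  rw [smul_eq_mul, smul_eq_mul, smul_eq_mul, smul_eq_mul,
    show (1 / 2 : ℝ) * x + 1 / 2 * y = (x + y) / 2 by ring] at h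
  linarith

lemma binH_add_binH_le_binH_midpoint {α : Type*} [Fintype α] {p q : α → ℝ}
    (hp : ∀ a, 0 ≤ p a) (hq : ∀ a, 0 ≤ q a) :
    (binH p + binH q) / 2 ≤ binH (fun a => (p a + q a) / 2) := by
  have hsum : (∑ a, negMulLog (p a) + ∑ a, negMulLog (q a)) / 2
      ≤ ∑ a, negMulLog ((p a + q a) / 2) := by
    rw [← sum_add_distrib, sum_div]
    exact sum_le_sum fun a _ => negMulLog_add_negMulLog_le_midpoint (hp a) (hq a)
  calc (binH p + binH q) / 2
      = ((∑ a, negMulLog (p a) + ∑ a, negMulLog (q a)) / 2) / log 2 := by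
        simp only [binH]
        ring
    _ ≤ binH (fun a => (p a + q a) / 2) :=
        div_le_div_of_nonneg_right hsum (log_pos one_lt_two).le

section Symmetrize

variable {α : Type*} [Fintype α] (M : α → α → ℝ)

lemma rowMarg_symmetrize :
    rowMarg (symmetrize M) = fun a => (rowMarg M a + colMarg M a) / 2 := by
  funext a
  simp only [rowMarg, colMarg, symmetrize, ← sum_div, sum_add_distrib]

lemma colMarg_symmetrize : colMarg (symmetrize M) = rowMarg (symmetrize M) := by
  funext a
  simp only [rowMarg, colMarg, symmetrize, add_comm]

lemma condHYX_symmetrize_eq_condHXY : condHYX (symmetrize M) = condHXY (symmetrize M) := by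
  rw [condHXY, colMarg_symmetrize, condHYX]

variable {M}

lemma jointH_symmetrize_le (hM : IsJointProbMat M) : jointH (symmetrize M) ≤ jointH M + 1 := by
  obtain ⟨hpos, hsum⟩ := hM
  have hlog2 : 0 < log 2 := log_pos one_lt_two
  have hsum' : ∑ a, ∑ b, M b a = 1 := sum_comm.trans hsum
  have hentropy' : ∑ a, ∑ b, negMulLog (M b a) = ∑ a, ∑ b, negMulLog (M a b) := sum_comm
  have hbound : ∑ a, ∑ b, negMulLog ((M a b + M b a) / 2)
      ≤ ∑ a, ∑ b, negMulLog (M a b) + log 2 :=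
    calc ∑ a, ∑ b, negMulLog ((M a b + M b a) / 2)
        ≤ ∑ a, ∑ b, ((negMulLog (M a b) + negMulLog (M b a)) / 2
            + (M a b + M b a) * log 2 / 2) := by
          gcongr with a _ b _
          rw [negMulLog_div_two]
          linarith [negMulLog_add_le (hpos a b) (hpos b a)]
      _ = ∑ a, ∑ b, negMulLog (M a b) + log 2 := by
          simp only [sum_add_distrib, ← sum_div, ← sum_mul, hentropy', hsum, hsum']
          ring
  simp only [jointH, binH, Fintype.sum_prod_type, symmetrize]
  rw [div_add_one hlog2.ne']
  exact div_le_div_of_nonneg_right hbound hlog2.le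

lemma condHYX_symmetrize_le (hM : IsJointProbMat M) :
    condHYX (symmetrize M) ≤ (condHYX M + condHXY M) / 2 + 1 := by
  have hjoint := jointH_symmetrize_le hM
  have hmarg := binH_add_binH_le_binH_midpoint (p := rowMarg M) (q := colMarg M)
    (fun a => sum_nonneg fun b _ => hM.1 a b) (fun a => sum_nonneg fun b _ => hM.1 b a)
  rw [condHYX, condHYX, condHXY, rowMarg_symmetrize]
  linarith

end Symmetrize

/-- Symmetrization theorem: the (equal) conditional entropies of the symmetrized matrix
exceed the maximal conditional entropy of `M` by at most one bit. -/
theorem symmetrize_condEntropy_le {α : Type*} [Fintype α] (M : α → α → ℝ)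
    (hM : IsJointProbMat M) :
    condHYX (symmetrize M) = condHXY (symmetrize M) ∧
    condHYX (symmetrize M) ≤ max (condHYX M) (condHXY M) + 1 := by
  refine ⟨condHYX_symmetrize_eq_condHXY M, (condHYX_symmetrize_le hM).trans ?_⟩
  linarith [le_max_left (condHYX M) (condHXY M), le_max_right (condHYX M) (condHXY M)]
end

section
/- Let M be a square joint probability matrix on a finite type α and let M̄ = (M + Mᵀ)/2 be its symmetrized matrix. Then the binary joint entropy of M̄ satisfies H(M) ≤ H(M̄) ≤ H(M) + 1, i.e., symmetrizing can only increase the joint entropy, and by at most one bit. -/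
/-!
Averaging `M` with its transpose averages two probability vectors of the same entropy `H(M)`.
Concavity of `x ↦ -x log x` makes the entropy of the average at least `H(M)`; its subadditivity,
`-(x + y) log (x + y) ≤ -x log x - y log y`, bounds the loss of concavity at a midpoint by
`(x + y)/2 · log 2`, which sums to one bit.
-/

open Real

namespace Real

lemma mul_log_le_mul_log_of_le {x z : ℝ} (hx : 0 ≤ x) (hxz : x ≤ z) :
    x * log x ≤ x * log z := by
  rcases hx.eq_or_lt with rfl | hx
  · simp
  · exact mul_le_mul_of_nonneg_left (log_le_log hx hxz) hx.le

lemma negMulLog_add_le {x y : ℝ} (hx : 0 ≤ x) (hy : 0 ≤ y) :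
    negMulLog (x + y) ≤ negMulLog x + negMulLog y := by
  have hxy := mul_log_le_mul_log_of_le hx (le_add_of_nonneg_right hy)
  have hyx := mul_log_le_mul_log_of_le hy (le_add_of_nonneg_left hx)
  simp only [negMulLog]
  linarith

lemma negMulLog_div_two (x : ℝ) : negMulLog (x / 2) = negMulLog x / 2 + x / 2 * log 2 := by
  rw [div_eq_mul_inv, negMulLog_mul]
  simp only [negMulLog, log_inv]
  ring

lemma negMulLog_add_div_two_ge {x y : ℝ} (hx : 0 ≤ x) (hy : 0 ≤ y) :
    (negMulLog x + negMulLog y) / 2 ≤ negMulLog ((x + y) / 2) := by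
  have h := concaveOn_negMulLog.2 (Set.mem_Ici.mpr hx) (Set.mem_Ici.mpr hy)
    (by norm_num : (0 : ℝ) ≤ 1 / 2) (by norm_num : (0 : ℝ) ≤ 1 / 2) (by norm_num)
  simp only [smul_eq_mul] at h
  have hmid : 1 / 2 * x + 1 / 2 * y = (x + y) / 2 := by ring
  rw [hmid] at h
  linarith

lemma negMulLog_add_div_two_le {x y : ℝ} (hx : 0 ≤ x) (hy : 0 ≤ y) :
    negMulLog ((x + y) / 2) ≤ (negMulLog x + negMulLog y) / 2 + (x + y) / 2 * log 2 := by
  rw [negMulLog_div_two]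
  linarith [negMulLog_add_le hx hy]

end Real

section binH

variable {α : Type*} [Fintype α]

lemma IsProbVec.comp_equiv {β : Type*} [Fintype β] (e : α ≃ β) {p : β → ℝ}
    (hp : IsProbVec p) : IsProbVec (p ∘ e) :=
  ⟨fun a => hp.1 (e a), by rw [← hp.2]; exact e.sum_comp p⟩

lemma binH_comp_equiv {β : Type*} [Fintype β] (e : α ≃ β) (p : β → ℝ) :
    binH (p ∘ e) = binH p := by
  simp only [binH, Function.comp_apply, e.sum_comp (fun b => negMulLog (p b))]

lemma binH_add_div_two_ge {p q : α → ℝ} (hp : ∀ a, 0 ≤ p a) (hq : ∀ a, 0 ≤ q a) :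
    (binH p + binH q) / 2 ≤ binH (fun a => (p a + q a) / 2) := by
  calc (binH p + binH q) / 2
      = (∑ a, (negMulLog (p a) + negMulLog (q a)) / 2) / log 2 := by
        simp only [binH, ← Finset.sum_div, Finset.sum_add_distrib]
        ring
    _ ≤ binH (fun a => (p a + q a) / 2) := by
        unfold binH
        gcongr with a
        exact negMulLog_add_div_two_ge (hp a) (hq a)

lemma binH_add_div_two_le {p q : α → ℝ} (hp : IsProbVec p) (hq : IsProbVec q) :
    binH (fun a => (p a + q a) / 2) ≤ (binH p + binH q) / 2 + 1 := by
  calc binH (fun a => (p a + q a) / 2)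
      ≤ (∑ a, ((negMulLog (p a) + negMulLog (q a)) / 2 + (p a + q a) / 2 * log 2)) / log 2 := by
        unfold binH
        gcongr with a
        exact negMulLog_add_div_two_le (hp.1 a) (hq.1 a)
    _ = (binH p + binH q) / 2 + 1 := by
        simp only [binH, Finset.sum_add_distrib, ← Finset.sum_div, ← Finset.sum_mul, hp.2, hq.2]
        field_simp
        ring

end binH

lemma IsJointProbMat.isProbVec {α β : Type*} [Fintype α] [Fintype β] {M : α → β → ℝ}
    (hM : IsJointProbMat M) : IsProbVec (fun ab : α × β => M ab.1 ab.2) :=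
  ⟨fun ab => hM.1 ab.1 ab.2, by rw [Fintype.sum_prod_type]; exact hM.2⟩

/-- Symmetrizing a square joint probability matrix can only increase the joint entropy,
and by at most one bit. -/
theorem symmetrize_jointEntropy_bounds {α : Type*} [Fintype α] (M : α → α → ℝ)
    (hM : IsJointProbMat M) :
    jointH M ≤ jointH (symmetrize M) ∧ jointH (symmetrize M) ≤ jointH M + 1 := by
  set p : α × α → ℝ := fun ab => M ab.1 ab.2
  set q : α × α → ℝ := p ∘ Equiv.prodComm α α
  have hp : IsProbVec p := hM.isProbVec
  have hq : IsProbVec q := hp.comp_equiv _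
  have hHq : binH q = jointH M := binH_comp_equiv _ p
  have hsymm : jointH (symmetrize M) = binH (fun ab => (p ab + q ab) / 2) := rfl
  have hHp : binH p = jointH M := rfl
  constructor
  · linarith [binH_add_div_two_ge hp.1 hq.1]
  · linarith [binH_add_div_two_le hp hq]
end
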